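/- For a connected ribbon graph with V vertices, E edges, F faces (F = number of cycles of σ₂ = σ₀^{−1}σ₁), the genus g of its surface of embedding, defined by 2 − 2g = V − E + F, satisfies g ≥ 0, i.e. V − E + F ≤ 2. -/

import Mathlib

/-!
Write `c(π)` for the number of cycles of a permutation `π` of `H`. Left multiplication by a
transposition `(a b)` changes `c` by exactly one: the cycles of `(a b) π` refine those of `π` with
`a` and `b` glued together, so `c` moves by at most one, and it cannot stay put because
`sign π = (-1) ^ (|H| - c(π))`. It drops precisely when `a` and `b` lie in different cycles of `π`.

For arbitrary `α, β` this gives `c(α) + c(β) + c(αβ) ≤ |H| + 2k`, with `k` the number of orbits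
of `⟨α, β⟩`, by induction on `β`. For `β x ≠ x`, the permutation `β' = (x βx) β` has the fixed
point `x` split off, so `c(β) = c(β') - 1`, and `c(αβ) = c((x βx) β'α)` exceeds
`c(αβ') = c(β'α)` by at most one. The orbits of `⟨α, β⟩` lie in those of `⟨α, β'⟩` with `x` and
`βx` glued, so `k` loses at most one, and only when `x` and `βx` lie in different orbits of
`⟨α, β'⟩`, hence in different cycles of `β'α`, where `c(αβ) = c(αβ') - 1`. The theorem is the case
`α = σ₀⁻¹`, `β = σ₁`, where `c(σ₁) = |H| / 2` and `k = 1`; the parity of `V - E + F` comes from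
`sign` being a homomorphism.
-/

/-- The number of cycles of a permutation, counting fixed points as 1-cycles. -/
def numCycles {H : Type*} [Fintype H] [DecidableEq H] (σ : Equiv.Perm H) : ℕ :=
  σ.cycleType.card + (Fintype.card H - σ.support.card)

open Equiv Equiv.Perm Subgroup MulAction

namespace Setoid

variable {α : Type*}

def identify (s : Setoid α) (a b : α) : Setoid α where
  r x y := s x y ∨ (s x a ∨ s x b) ∧ (s y a ∨ s y b)
  iseqv.refl x := .inl (s.refl x)
  iseqv.symm := by
    rintro x y (h | ⟨hx, hy⟩)
    exacts [.inl (s.symm h), .inr ⟨hy, hx⟩]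
  iseqv.trans := by
    rintro x y z (hxy | ⟨hx, hy⟩) (hyz | ⟨hy', hz⟩)
    · exact .inl (s.trans hxy hyz)
    · exact .inr ⟨hy'.imp (s.trans hxy) (s.trans hxy), hz⟩
    · exact .inr ⟨hx, hy.imp (s.trans (s.symm hyz)) (s.trans (s.symm hyz))⟩
    · exact .inr ⟨hx, hz⟩

theorem card_quotient_le_of_le [Finite α] {s t : Setoid α} (h : s ≤ t) :
    Nat.card (Quotient t) ≤ Nat.card (Quotient s) :=
  Nat.card_le_card_of_surjective (map_of_le h) (Quotient.ind fun x => ⟨⟦x⟧, rfl⟩)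

variable (s : Setoid α) (a b : α)

theorem le_identify : s ≤ s.identify a b := fun _ _ h => .inl h

theorem identify_swap_apply [DecidableEq α] (y : α) : s.identify a b y (swap a b y) := by
  rcases eq_or_ne y a with rfl | hya
  · rw [swap_apply_left]
    exact .inr ⟨.inl (s.refl _), .inr (s.refl _)⟩
  rcases eq_or_ne y b with rfl | hyb
  · rw [swap_apply_right]
    exact .inr ⟨.inr (s.refl _), .inl (s.refl _)⟩
  exact (swap_apply_of_ne_of_ne hya hyb).symm ▸ (s.identify a b).refl y

/-- Away from the class of `b`, passing to `s.identify a b` glues no classes. -/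
theorem card_quotient_le_card_identify_add_one [Finite α] :
    Nat.card (Quotient s) ≤ Nat.card (Quotient (s.identify a b)) + 1 := by
  have hinj : Set.InjOn (map_of_le (le_identify s a b)) {(⟦b⟧ : Quotient s)}ᶜ := by
    rintro ⟨x⟩ hx ⟨y⟩ hy hxy
    rcases Quotient.exact hxy with h | ⟨hx', hy'⟩
    · exact Quotient.sound h
    · have hxa : s x a := hx'.resolve_right fun h => hx (Quotient.sound h)
      have hya : s y a := hy'.resolve_right fun h => hy (Quotient.sound h)
      exact Quotient.sound (s.trans hxa (s.symm hya))
  have := Set.ncard_le_ncard_of_injOn _ (fun _ _ => Set.mem_univ _) hinj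
  have hcompl := Set.ncard_sdiff_singleton_add_one (Set.mem_univ (⟦b⟧ : Quotient s))
  rw [← Set.compl_eq_univ_sdiff, Set.ncard_univ] at hcompl
  rw [Set.ncard_univ] at this
  omega

variable {s a b}

theorem identify_eq_self (h : s a b) : s.identify a b = s := by
  refine le_antisymm (fun x y hxy => ?_) (le_identify s a b)
  rcases hxy with hxy | ⟨hx, hy⟩
  · exact hxy
  · have hxa : s x a := hx.elim id fun hxb => s.trans hxb (s.symm h)
    have hya : s y a := hy.elim id fun hyb => s.trans hyb (s.symm h)
    exact s.trans hxa (s.symm hya)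

end Setoid

section Orbits

variable {H : Type*}

noncomputable def numOrbits (G : Subgroup (Perm H)) : ℕ := Nat.card (Quotient (orbitRel G H))

theorem orbitRel_apply_self_of_mem {G : Subgroup (Perm H)} {g : Perm H} (hg : g ∈ G) (x : H) :
    orbitRel G H x (g x) :=
  (orbitRel G H).symm (mem_orbit_iff.2 ⟨⟨g, hg⟩, rfl⟩)

theorem orbitRel_mono {G K : Subgroup (Perm H)} (h : G ≤ K) : orbitRel G H ≤ orbitRel K H := by
  intro x y hxy
  obtain ⟨⟨g, hg⟩, rfl⟩ := mem_orbit_iff.1 (orbitRel_apply.1 hxy)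
  exact (orbitRel K H).symm (orbitRel_apply_self_of_mem (h hg) y)

theorem orbitRel_closure_le {S : Set (Perm H)} {s : Setoid H} (h : ∀ σ ∈ S, ∀ x, s x (σ x)) :
    orbitRel (closure S) H ≤ s := by
  have hpreserve : ∀ g ∈ closure S, ∀ x, s x (g x) := by
    intro g hg
    induction hg using closure_induction with
    | mem σ hσ => exact h σ hσ
    | one => exact s.refl
    | mul g k _ _ hg hk => exact fun x => s.trans (hk x) (hg (k x))
    | inv g _ hg => exact fun x => by simpa using s.symm (hg (g⁻¹ x))
  intro x y hxy
  obtain ⟨⟨g, hg⟩, rfl⟩ := mem_orbit_iff.1 (orbitRel_apply.1 hxy)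
  exact s.symm (hpreserve g hg y)

theorem orbitRel_zpowers_apply {σ : Perm H} {x y : H} :
    orbitRel (zpowers σ) H x y ↔ σ.SameCycle x y := by
  rw [orbitRel_apply, mem_orbit_iff, sameCycle_comm]
  constructor
  · rintro ⟨⟨g, hg⟩, rfl⟩
    obtain ⟨i, rfl⟩ := mem_zpowers_iff.1 hg
    exact ⟨i, rfl⟩
  · rintro ⟨i, rfl⟩
    exact ⟨⟨σ ^ i, zpow_mem_zpowers σ i⟩, rfl⟩

theorem numOrbits_le_one [Finite H] {G : Subgroup (Perm H)} (h : ∀ a b : H, ∃ g ∈ G, g a = b) :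
    numOrbits G ≤ 1 := by
  refine Finite.card_le_one_iff_subsingleton.2 ⟨Quotient.ind₂ fun a b => Quotient.sound ?_⟩
  obtain ⟨g, hg, rfl⟩ := h b a
  exact (orbitRel G H).symm (orbitRel_apply_self_of_mem hg b)

theorem identify_orbitRel_swap_mul_apply [DecidableEq H] {G : Subgroup (Perm H)} {g : Perm H}
    (hg : g ∈ G) (a b x : H) : (orbitRel G H).identify a b x ((swap a b * g) x) :=
  ((orbitRel G H).identify a b).trans'
    (Setoid.le_identify _ a b (orbitRel_apply_self_of_mem hg x))
    (Setoid.identify_swap_apply _ a b (g x))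

theorem orbitRel_zpowers_swap_mul_le [DecidableEq H] (σ : Perm H) (a b : H) :
    orbitRel (zpowers (swap a b * σ)) H ≤ (orbitRel (zpowers σ) H).identify a b := by
  rw [zpowers_eq_closure]
  exact orbitRel_closure_le fun _ h x => h ▸ identify_orbitRel_swap_mul_apply (mem_zpowers σ) a b x

theorem orbitRel_closure_pair_swap_mul_le [DecidableEq H] (α β : Perm H) (a b : H) :
    orbitRel (closure {α, swap a b * β}) H ≤ (orbitRel (closure {α, β}) H).identify a b := by
  refine orbitRel_closure_le ?_
  rintro _ (rfl | rfl) x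
  · exact Setoid.le_identify _ a b (orbitRel_apply_self_of_mem (subset_closure (.inl rfl)) x)
  · exact identify_orbitRel_swap_mul_apply (subset_closure (.inr rfl)) a b x

end Orbits

section Cycles

variable {H : Type*} [Fintype H] [DecidableEq H]

/-- `cycleOf` is `1` at every fixed point, so fixed points are labelled by themselves. -/
def cycleLabel (σ : Perm H) (x : H) : Perm H ⊕ H :=
  if σ x = x then .inr x else .inl (σ.cycleOf x)

theorem cycleLabel_eq_cycleLabel_iff {σ : Perm H} {x y : H} :
    cycleLabel σ x = cycleLabel σ y ↔ σ.SameCycle x y := by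
  unfold cycleLabel
  by_cases hx : σ x = x <;> by_cases hy : σ y = y <;>
    simp only [hx, hy, ↓reduceIte, Sum.inr.injEq, Sum.inl.injEq, reduceCtorEq, false_iff]
  · exact ⟨fun h => h ▸ .rfl, fun h => h.eq_of_left hx⟩
  · exact fun h => hy (h.apply_eq_self_iff.1 hx)
  · exact fun h => hx (h.apply_eq_self_iff.2 hy)
  · exact (sameCycle_iff_cycleOf_eq_of_mem_support (mem_support.2 hx) (mem_support.2 hy)).symm

theorem range_cycleLabel (σ : Perm H) :
    Set.range (cycleLabel σ) = Sum.inl '' ↑σ.cycleFactorsFinset ∪ Sum.inr '' ↑σ.supportᶜ := by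
  ext (c | x)
  · simp only [Set.mem_range, cycleLabel, Set.mem_union, Set.mem_image, Finset.mem_coe,
      Sum.inl.injEq, reduceCtorEq, and_false, exists_false, or_false]
    constructor
    · rintro ⟨y, hy⟩
      by_cases hfix : σ y = y
      · simp [hfix] at hy
      · simp only [hfix, ↓reduceIte, Sum.inl.injEq] at hy
        exact ⟨c, hy ▸ cycleOf_mem_cycleFactorsFinset_iff.2 (mem_support.2 hfix), rfl⟩
    · rintro ⟨c, hc, rfl⟩
      obtain ⟨x, hx⟩ := (mem_cycleFactorsFinset_iff.1 hc).1.nonempty_support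
      have hσx : σ x ≠ x := mem_support.1 (mem_cycleFactorsFinset_support_le hc hx)
      exact ⟨x, by rw [if_neg hσx, cycle_is_cycleOf hx hc]⟩
  · simp only [Set.mem_range, cycleLabel, Set.mem_union, Set.mem_image, Finset.mem_coe,
      Finset.mem_compl, mem_support, not_not, Sum.inr.injEq, reduceCtorEq, and_false,
      exists_false, false_or]
    constructor
    · rintro ⟨y, hy⟩
      by_cases hfix : σ y = y
      · simp only [hfix, ↓reduceIte, Sum.inr.injEq] at hy
        exact ⟨y, hfix, hy⟩
      · simp [hfix] at hy
    · rintro ⟨y, hy, rfl⟩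
      exact ⟨y, if_pos hy⟩

theorem numCycles_eq_numOrbits_zpowers (σ : Perm H) : numCycles σ = numOrbits (zpowers σ) := by
  have hker : orbitRel (zpowers σ) H = Setoid.ker (cycleLabel σ) :=
    Setoid.ext fun x y => by
      rw [Setoid.ker_def, cycleLabel_eq_cycleLabel_iff, orbitRel_zpowers_apply]
  have hdisj : Disjoint (Sum.inl '' (↑σ.cycleFactorsFinset : Set (Perm H)))
      (Sum.inr '' (↑σ.supportᶜ : Set H)) :=
    Set.disjoint_left.2 fun _ ⟨_, _, h⟩ ⟨_, _, h'⟩ => Sum.inr_ne_inl (h'.trans h.symm)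
  rw [numOrbits, hker, Nat.card_congr (Setoid.quotientKerEquivRange _), Nat.card_coe_set_eq,
    range_cycleLabel, Set.ncard_union_eq hdisj, Set.ncard_image_of_injective _ Sum.inl_injective,
    Set.ncard_image_of_injective _ Sum.inr_injective, Set.ncard_coe_finset, Set.ncard_coe_finset,
    Finset.card_compl, numCycles, cycleType_def, Multiset.card_map]
  rfl

theorem numCycles_one : numCycles (1 : Perm H) = Fintype.card H := by
  simp [numCycles]

theorem numCycles_inv (σ : Perm H) : numCycles σ⁻¹ = numCycles σ := by
  rw [numCycles, numCycles, cycleType_inv, support_inv]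

theorem numCycles_mul_comm (σ τ : Perm H) : numCycles (σ * τ) = numCycles (τ * σ) := by
  have h : σ * τ = σ * (τ * σ) * σ⁻¹ := by group
  rw [numCycles, numCycles, h, cycleType_conj, card_support_conj]

theorem sign_eq_negOnePow (σ : Perm H) :
    sign σ = ((Fintype.card H : ℤ) - numCycles σ).negOnePow := by
  have hsupp : σ.support.card ≤ Fintype.card H := Finset.card_le_univ _
  rw [sign_of_cycleType, sum_cycleType, ← zpow_natCast, ← Int.negOnePow_def, Int.negOnePow_eq_iff]
  refine ⟨σ.cycleType.card, ?_⟩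
  push_cast [numCycles, Nat.cast_sub hsupp]
  ring

theorem even_card_add_numCycles_mul (σ τ : Perm H) :
    Even ((Fintype.card H : ℤ) + numCycles (σ * τ) + numCycles σ + numCycles τ) := by
  have h := sign_mul σ τ
  rw [sign_eq_negOnePow, sign_eq_negOnePow, sign_eq_negOnePow, ← Int.negOnePow_add,
    Int.negOnePow_eq_iff] at h
  obtain ⟨k, hk⟩ := h
  exact ⟨k + Fintype.card H + numCycles (σ * τ), by linarith⟩

theorem numCycles_swap_mul_ne {a b : H} (hab : a ≠ b) (σ : Perm H) :
    numCycles (swap a b * σ) ≠ numCycles σ := by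
  intro h
  have hsign := sign_eq_negOnePow (swap a b * σ)
  rw [h, ← sign_eq_negOnePow, map_mul, sign_swap hab, neg_one_mul] at hsign
  exact neg_units_ne_self _ hsign

theorem two_mul_numCycles_eq_card_of_involution {σ : Perm H} (hinv : σ * σ = 1)
    (hfpf : ∀ x, σ x ≠ x) : 2 * numCycles σ = Fintype.card H := by
  have hsupp : σ.support = Finset.univ := Finset.eq_univ_of_forall fun x => mem_support.2 (hfpf x)
  have htwo : ∀ k ∈ σ.cycleType, k = 2 := fun k hk =>
    le_antisymm (Nat.le_of_dvd two_pos ((dvd_of_mem_cycleType hk).trans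
      (orderOf_dvd_of_pow_eq_one (by rw [sq, hinv])))) (two_le_of_mem_cycleType hk)
  have hsum := sum_cycleType σ
  rw [Multiset.eq_replicate_card.2 htwo, Multiset.sum_replicate, smul_eq_mul, hsupp,
    Finset.card_univ] at hsum
  rw [numCycles, hsupp, Finset.card_univ, Nat.sub_self, add_zero]
  linarith

theorem numCycles_swap_mul_le_add_one (σ : Perm H) (a b : H) :
    numCycles (swap a b * σ) ≤ numCycles σ + 1 := by
  have hle := orbitRel_zpowers_swap_mul_le (swap a b * σ) a b
  rw [swap_mul_self_mul] at hle
  rw [numCycles_eq_numOrbits_zpowers, numCycles_eq_numOrbits_zpowers]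
  exact (Setoid.card_quotient_le_card_identify_add_one _ a b).trans
    (Nat.add_le_add_right (Setoid.card_quotient_le_of_le hle) 1)

theorem numCycles_le_numCycles_swap_mul {σ : Perm H} {a b : H} (h : σ.SameCycle a b) :
    numCycles σ ≤ numCycles (swap a b * σ) := by
  have hle := orbitRel_zpowers_swap_mul_le σ a b
  rw [Setoid.identify_eq_self (orbitRel_zpowers_apply.2 h)] at hle
  rw [numCycles_eq_numOrbits_zpowers, numCycles_eq_numOrbits_zpowers]
  exact Setoid.card_quotient_le_of_le hle

theorem numCycles_swap_mul_of_sameCycle {σ : Perm H} {a b : H} (hab : a ≠ b)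
    (h : σ.SameCycle a b) : numCycles (swap a b * σ) = numCycles σ + 1 := by
  have := numCycles_swap_mul_le_add_one σ a b
  have := numCycles_le_numCycles_swap_mul h
  have := numCycles_swap_mul_ne hab σ
  omega

/-- `swap a b * σ` follows `σ` along the cycle of `a` until it reaches `σ⁻¹ a`, which it sends
to `b`. -/
theorem sameCycle_swap_mul_of_not_sameCycle {σ : Perm H} {a b : H} (h : ¬σ.SameCycle a b) :
    (swap a b * σ).SameCycle a b := by
  have hcycle : ∀ k : ℕ, (swap a b * σ).SameCycle a ((σ ^ k) a) := by
    intro k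
    induction k with
    | zero => exact .rfl
    | succ k ih =>
      rw [pow_succ', mul_apply]
      by_cases ha : σ ((σ ^ k) a) = a
      · rw [ha]
      have hb : σ ((σ ^ k) a) ≠ b := fun hb =>
        h (hb ▸ sameCycle_apply_right.2 (sameCycle_pow_right.2 .rfl))
      rw [← swap_apply_of_ne_of_ne ha hb, ← mul_apply]
      exact sameCycle_apply_right.2 ih
  obtain ⟨k, hk⟩ :=
    SameCycle.exists_nat_pow_eq (⟨-1, by rw [zpow_neg_one]⟩ : σ.SameCycle a (σ⁻¹ a))
  have hb : (swap a b * σ) (σ⁻¹ a) = b := by simp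
  have hlast := sameCycle_apply_right.2 (hk ▸ hcycle k)
  rwa [hb] at hlast

theorem numCycles_swap_mul_of_not_sameCycle {σ : Perm H} {a b : H} (hab : a ≠ b)
    (h : ¬σ.SameCycle a b) : numCycles (swap a b * σ) + 1 = numCycles σ := by
  simpa only [swap_mul_self_mul, eq_comm] using
    numCycles_swap_mul_of_sameCycle hab (sameCycle_swap_mul_of_not_sameCycle h)

theorem numCycles_mul_swap_mul_add_two_mul_numOrbits_le (α β : Perm H) {a b : H} (hab : a ≠ b) :
    numCycles (α * (swap a b * β)) + 2 * numOrbits (closure {α, β}) ≤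
      numCycles (α * β) + 1 + 2 * numOrbits (closure {α, swap a b * β}) := by
  have horb := Setoid.card_quotient_le_of_le (orbitRel_closure_pair_swap_mul_le α β a b)
  rw [numCycles_mul_comm α (swap a b * β), mul_assoc, numCycles_mul_comm α β]
  unfold numOrbits
  by_cases hc : orbitRel (closure {α, β}) H a b
  · rw [Setoid.identify_eq_self hc] at horb
    have := numCycles_swap_mul_le_add_one (β * α) a b
    omega
  · have hβα : ¬(β * α).SameCycle a b := fun h => hc <| orbitRel_mono
      (zpowers_le.2 (mul_mem (subset_closure (.inr rfl)) (subset_closure (.inl rfl))))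
      (orbitRel_zpowers_apply.2 h)
    have := numCycles_swap_mul_of_not_sameCycle hab hβα
    have := Setoid.card_quotient_le_card_identify_add_one (orbitRel (closure {α, β}) H) a b
    omega

theorem numCycles_add_numCycles_add_numCycles_mul_le (α β : Perm H) :
    numCycles α + numCycles β + numCycles (α * β) ≤
      Fintype.card H + 2 * numOrbits (closure {α, β}) := by
  induction hn : β.support.card using Nat.strong_induction_on generalizing β with
  | _ n ih =>
  by_cases hβ1 : β = 1
  · subst hβ1
    have hclosure : closure {α, 1} = zpowers α := by
      rw [Set.pair_comm, closure_insert_one, zpowers_eq_closure]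
    rw [mul_one, numCycles_one, hclosure, ← numCycles_eq_numOrbits_zpowers]
    omega
  obtain ⟨x, hx⟩ : ∃ x, β x ≠ x := not_forall.1 fun h => hβ1 (Equiv.ext h)
  set β' := swap x (β x) * β
  have hβ : swap x (β x) * β' = β := swap_mul_self_mul _ _ _
  have hsplit : numCycles β' = numCycles β + 1 :=
    numCycles_swap_mul_of_sameCycle (Ne.symm hx) ⟨1, rfl⟩
  have hstep := numCycles_mul_swap_mul_add_two_mul_numOrbits_le α β' (Ne.symm hx)
  have IH := ih _ (hn ▸ card_support_swap_mul hx) β' rfl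
  rw [hβ] at hstep
  omega

end Cycles

/-- Euler-characteristic bound for connected ribbon graphs: with `V` the number of
cycles of `σ₀`, `E = |H|/2` (`σ₁` a fixed-point-free involution), `F` the number of
cycles of `σ₂ = σ₀⁻¹σ₁`, and connectedness meaning `⟨σ₀, σ₁⟩` acts transitively on the
half-edges, one has `V - E + F ≤ 2` and `V - E + F` is even, i.e. the genus `g` defined
by `2 - 2g = V - E + F` is a nonnegative integer. -/
theorem stmt_7 {H : Type*} [Fintype H] [DecidableEq H] (σ₀ σ₁ : Equiv.Perm H)
    (hinv : σ₁ * σ₁ = 1) (hfpf : ∀ h : H, σ₁ h ≠ h)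
    (htrans : ∀ a b : H, ∃ g ∈ Subgroup.closure ({σ₀, σ₁} : Set (Equiv.Perm H)), g a = b) :
    (numCycles σ₀ : ℤ) - (Fintype.card H / 2 : ℕ) + numCycles (σ₀⁻¹ * σ₁) ≤ 2 ∧
    Even ((numCycles σ₀ : ℤ) - (Fintype.card H / 2 : ℕ) + numCycles (σ₀⁻¹ * σ₁)) := by
  have hE := two_mul_numCycles_eq_card_of_involution hinv hfpf
  have hgen : closure {σ₀, σ₁} ≤ closure {σ₀⁻¹, σ₁} := (closure_le _).2 <|
    Set.insert_subset (inv_inv σ₀ ▸ inv_mem (subset_closure (.inl rfl)))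
      (Set.singleton_subset_iff.2 (subset_closure (.inr rfl)))
  have hconn : numOrbits (closure {σ₀⁻¹, σ₁}) ≤ 1 :=
    numOrbits_le_one fun a b => (htrans a b).imp fun _ ⟨hg, h⟩ => ⟨hgen hg, h⟩
  have hbound := numCycles_add_numCycles_add_numCycles_mul_le σ₀⁻¹ σ₁
  obtain ⟨k, hk⟩ := even_card_add_numCycles_mul σ₀⁻¹ σ₁
  rw [numCycles_inv] at hbound hk
  exact ⟨by omega, ⟨k - 2 * numCycles σ₁, by omega⟩⟩
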